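/- arXiv:0711.3836 — 4 statements merged into one kernel-verified Lean document; each statement's English description precedes it below -/
import Mathlib

section
/- Define a Lie algebra g_6 with basis e_1,...,e_4 and nonzero brackets [e_1,e_2] = e_2, [e_1,e_3] = e_3, [e_1,e_4] = 2e_4, [e_2,e_3] = e_4. The map e_1 ↦ e_{11} - e_{33}, e_2 ↦ (√2/2)(e_{12} - e_{23}), e_3 ↦ (√2/2)(e_{12} + e_{23}), e_4 ↦ e_{13} is an injective Lie algebra homomorphism into gl(3,C). In particular g_6 admits a 3-dimensional faithful representation. -/
open Matrix

/-- The 3×3 matrix unit `e_{ij}` (indices 0-based). -/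
noncomputable def E3 (i j : Fin 3) : Matrix (Fin 3) (Fin 3) ℂ := single i j 1

lemma E3mul (i j k l : Fin 3) : E3 i j * E3 k l = if j = k then E3 i l else 0 := by
  by_cases h : j = k
  · subst h; simp [E3, Matrix.single_mul_single_same]
  · simp [E3, Matrix.single_mul_single_of_ne _ _ _ (h := h), h]

lemma sq2 : ((Real.sqrt 2 : ℂ)) * ((Real.sqrt 2 : ℂ)) = 2 := by
  rw [← Complex.ofReal_mul, Real.mul_self_sqrt (by norm_num)]
  norm_num

lemma sqrt2_ne : ((Real.sqrt 2 : ℂ)) ≠ 0 := by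
  intro h
  have := sq2
  rw [h] at this
  simp at this

/-- The map `e₁ ↦ e₁₁ - e₃₃`, `e₂ ↦ (√2/2)(e₁₂ - e₂₃)`, `e₃ ↦ (√2/2)(e₁₂ + e₂₃)`,
`e₄ ↦ e₁₃` is an injective Lie algebra homomorphism of `g₆` (brackets `[e₁,e₂] = e₂`,
`[e₁,e₃] = e₃`, `[e₁,e₄] = 2e₄`, `[e₂,e₃] = e₄`, rest zero) into `gl(3,ℂ)`:
the images are linearly independent and satisfy the defining brackets; thus `g₆` has
a 3-dimensional faithful representation. -/
theorem g6_faithful_rep :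
    LinearIndependent ℂ
      ![E3 0 0 - E3 2 2, ((Real.sqrt 2 : ℂ) / 2) • (E3 0 1 - E3 1 2),
        ((Real.sqrt 2 : ℂ) / 2) • (E3 0 1 + E3 1 2), E3 0 2] ∧
    ⁅E3 0 0 - E3 2 2, ((Real.sqrt 2 : ℂ) / 2) • (E3 0 1 - E3 1 2)⁆ =
      ((Real.sqrt 2 : ℂ) / 2) • (E3 0 1 - E3 1 2) ∧
    ⁅E3 0 0 - E3 2 2, ((Real.sqrt 2 : ℂ) / 2) • (E3 0 1 + E3 1 2)⁆ =
      ((Real.sqrt 2 : ℂ) / 2) • (E3 0 1 + E3 1 2) ∧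
    ⁅E3 0 0 - E3 2 2, E3 0 2⁆ = (2 : ℂ) • E3 0 2 ∧
    ⁅((Real.sqrt 2 : ℂ) / 2) • (E3 0 1 - E3 1 2),
      ((Real.sqrt 2 : ℂ) / 2) • (E3 0 1 + E3 1 2)⁆ = E3 0 2 ∧
    ⁅((Real.sqrt 2 : ℂ) / 2) • (E3 0 1 - E3 1 2), E3 0 2⁆ = 0 ∧
    ⁅((Real.sqrt 2 : ℂ) / 2) • (E3 0 1 + E3 1 2), E3 0 2⁆ = 0 := by
  refine ⟨?_, ?_, ?_, ?_, ?_, ?_, ?_⟩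
  · rw [Fintype.linearIndependent_iff]
    intro g hg
    simp only [Fin.sum_univ_four, Matrix.cons_val_zero, Matrix.cons_val_one, Matrix.head_cons,
      Matrix.cons_val_two, Matrix.tail_cons, Matrix.cons_val_three] at hg
    have h := fun i j => congrFun (congrFun hg i) j
    have h00 := h 0 0
    have h02 := h 0 2
    have h01 := h 0 1
    have h12 := h 1 2
    simp [E3, Matrix.single_apply, Matrix.smul_apply, Matrix.add_apply, Matrix.sub_apply,
      smul_smul] at h00 h02 h01 h12
    have hg0 : g 0 = 0 := h00
    have hg3 : g 3 = 0 := h02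
    have key : (Real.sqrt 2 : ℂ) / 2 ≠ 0 := by
      simp [div_eq_zero_iff, sqrt2_ne]
    have h1 : g 1 + g 2 = 0 := by
      have hm : (g 1 + g 2) * ((Real.sqrt 2 : ℂ) / 2) = 0 := by linear_combination h01
      rcases mul_eq_zero.mp hm with h' | h'
      · exact h'
      · exact absurd h' key
    have h2 : g 2 - g 1 = 0 := by
      have hm : (g 2 - g 1) * ((Real.sqrt 2 : ℂ) / 2) = 0 := by linear_combination h12
      rcases mul_eq_zero.mp hm with h' | h'
      · exact h'
      · exact absurd h' key
    have hg1 : g 1 = 0 := by linear_combination (h1 - h2) / 2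
    have hg2 : g 2 = 0 := by linear_combination (h1 + h2) / 2
    intro i
    fin_cases i
    · exact hg0
    · exact hg1
    · exact hg2
    · exact hg3
  · simp only [Ring.lie_def, smul_sub, sub_mul, mul_sub, mul_smul_comm, smul_mul_assoc, E3mul]
    simp [Fin.ext_iff]
  · simp only [Ring.lie_def, smul_add, smul_sub, sub_mul, mul_sub, add_mul, mul_add,
      mul_smul_comm, smul_mul_assoc, E3mul]
    simp [Fin.ext_iff]
  · simp only [Ring.lie_def, sub_mul, mul_sub, E3mul]
    simp [Fin.ext_iff, two_smul]
  · simp only [Ring.lie_def, smul_add, smul_sub, sub_mul, mul_sub, add_mul, mul_add,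
      mul_smul_comm, smul_mul_assoc, E3mul, smul_smul]
    simp [Fin.ext_iff]
    rw [div_mul_div_comm, sq2]
    norm_num
    module
  · simp only [Ring.lie_def, smul_sub, sub_mul, mul_sub, smul_mul_assoc, mul_smul_comm, E3mul]
    simp [Fin.ext_iff]
  · simp only [Ring.lie_def, smul_add, add_mul, mul_add, sub_mul, mul_sub, smul_mul_assoc,
      mul_smul_comm, E3mul]
    simp [Fin.ext_iff]
end

section
/- On C^3 with basis e_1, e_2, e_3, the product defined by e_1*e_1 = e_1 - e_2 + (1/2)e_3, e_1*e_2 = e_2 + (1/2)e_3, e_1*e_3 = e_3, e_2*e_1 = e_2 - (1/2)e_3, e_2*e_2 = (1/2)e_3, e_3*e_1 = e_3, and all other products of basis vectors zero, is left-symmetric, and its commutator Lie algebra satisfies [e_1,e_2] = e_3, [e_1,e_3] = [e_2,e_3] = 0 (the Heisenberg algebra). -/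
noncomputable def e3 (i : Fin 3) : Fin 3 → ℂ := Pi.single i 1

lemma e3_expand (x : Fin 3 → ℂ) : x = x 0 • e3 0 + x 1 • e3 1 + x 2 • e3 2 := by
  funext i; fin_cases i <;> simp [e3]

lemma lift3 (f g : (Fin 3 → ℂ) →ₗ[ℂ] (Fin 3 → ℂ))
    (h : ∀ i, f (e3 i) = g (e3 i)) (x : Fin 3 → ℂ) : f x = g x := by
  conv_lhs => rw [e3_expand x]
  conv_rhs => rw [e3_expand x]
  simp [map_add, map_smul, h 0, h 1, h 2]

/-- The product on `ℂ³` with `e₁*e₁ = e₁ - e₂ + ½e₃`, `e₁*e₂ = e₂ + ½e₃`,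
`e₁*e₃ = e₃`, `e₂*e₁ = e₂ - ½e₃`, `e₂*e₂ = ½e₃`, `e₃*e₁ = e₃` (other basis
products zero) is left-symmetric and its commutator gives the Heisenberg algebra. -/
theorem heisenberg_lsa
    (mul : (Fin 3 → ℂ) →ₗ[ℂ] (Fin 3 → ℂ) →ₗ[ℂ] (Fin 3 → ℂ))
    (h11 : mul (e3 0) (e3 0) = e3 0 - e3 1 + (1 / 2 : ℂ) • e3 2)
    (h12 : mul (e3 0) (e3 1) = e3 1 + (1 / 2 : ℂ) • e3 2)
    (h13 : mul (e3 0) (e3 2) = e3 2)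
    (h21 : mul (e3 1) (e3 0) = e3 1 - (1 / 2 : ℂ) • e3 2)
    (h22 : mul (e3 1) (e3 1) = (1 / 2 : ℂ) • e3 2)
    (h23 : mul (e3 1) (e3 2) = 0)
    (h31 : mul (e3 2) (e3 0) = e3 2)
    (h32 : mul (e3 2) (e3 1) = 0)
    (h33 : mul (e3 2) (e3 2) = 0) :
    (∀ x y z : Fin 3 → ℂ,
      mul (mul x y) z - mul x (mul y z) = mul (mul y x) z - mul y (mul x z)) ∧
    mul (e3 0) (e3 1) - mul (e3 1) (e3 0) = e3 2 ∧
    mul (e3 0) (e3 2) - mul (e3 2) (e3 0) = 0 ∧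
    mul (e3 1) (e3 2) - mul (e3 2) (e3 1) = 0 := by
  have key : ∀ i j k, mul (mul (e3 i) (e3 j)) (e3 k) - mul (e3 i) (mul (e3 j) (e3 k))
      = mul (mul (e3 j) (e3 i)) (e3 k) - mul (e3 j) (mul (e3 i) (e3 k)) := by
    intro i j k
    fin_cases i <;> fin_cases j <;> fin_cases k <;>
      simp [h11, h12, h13, h21, h22, h23, h31, h32, h33, map_add, map_sub, map_smul,
        smul_sub, smul_add]
  have step1 : ∀ i j (z : Fin 3 → ℂ),
      mul (mul (e3 i) (e3 j)) z - mul (e3 i) (mul (e3 j) z)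
      = mul (mul (e3 j) (e3 i)) z - mul (e3 j) (mul (e3 i) z) := by
    intro i j z
    have := lift3 (mul (mul (e3 i) (e3 j)) - (mul (e3 i)).comp (mul (e3 j)))
      (mul (mul (e3 j) (e3 i)) - (mul (e3 j)).comp (mul (e3 i)))
      (fun k => by simpa using key i j k) z
    simpa using this
  have step2 : ∀ i (y z : Fin 3 → ℂ),
      mul (mul (e3 i) y) z - mul (e3 i) (mul y z)
      = mul (mul y (e3 i)) z - mul y (mul (e3 i) z) := by
    intro i y z
    have := lift3 ((mul.flip z).comp (mul (e3 i)) - (mul (e3 i)).comp (mul.flip z))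
      ((mul.flip z).comp (mul.flip (e3 i)) - mul.flip (mul (e3 i) z))
      (fun j => by simpa using step1 i j z) y
    simpa using this
  refine ⟨fun x y z => ?_, ?_, ?_, ?_⟩
  · have := lift3 ((mul.flip z).comp (mul.flip y) - mul.flip (mul y z))
      ((mul.flip z).comp (mul y) - (mul y).comp (mul.flip z))
      (fun i => by simpa using step2 i y z) x
    simpa using this
  · rw [h12, h21]; module
  · rw [h13, h31]; simp
  · rw [h23, h32]; simp
end

section
/- On C^4 with basis e_1,...,e_4, the product defined by e_1*e_1 = e_1 + e_3 + 2e_4, e_1*e_2 = e_2 + e_3, e_1*e_3 = e_3 + e_4, e_1*e_4 = e_4, e_2*e_1 = e_2, e_3*e_1 = e_3, e_4*e_1 = e_4, and all other basis products zero, is left-symmetric, and its commutator Lie algebra satisfies [e_1,e_2] = e_3, [e_1,e_3] = e_4, with all other brackets of basis vectors zero (the filiform algebra n_4). -/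
/-- The standard basis vector of `ℂ⁴`. -/
noncomputable def e4 (i : Fin 4) : Fin 4 → ℂ := Pi.single i 1

/-- The product on `ℂ⁴` with `e₁*e₁ = e₁ + e₃ + 2e₄`, `e₁*e₂ = e₂ + e₃`,
`e₁*e₃ = e₃ + e₄`, `e₁*e₄ = e₄`, `e₂*e₁ = e₂`, `e₃*e₁ = e₃`, `e₄*e₁ = e₄`
(other basis products zero) is left-symmetric, with commutator brackets
`[e₁,e₂] = e₃`, `[e₁,e₃] = e₄` and all other basis brackets zero (the
filiform algebra `n₄`). -/
theorem n4_lsa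
    (mul : (Fin 4 → ℂ) →ₗ[ℂ] (Fin 4 → ℂ) →ₗ[ℂ] (Fin 4 → ℂ))
    (h11 : mul (e4 0) (e4 0) = e4 0 + e4 2 + (2 : ℂ) • e4 3)
    (h12 : mul (e4 0) (e4 1) = e4 1 + e4 2)
    (h13 : mul (e4 0) (e4 2) = e4 2 + e4 3)
    (h14 : mul (e4 0) (e4 3) = e4 3)
    (h21 : mul (e4 1) (e4 0) = e4 1)
    (h31 : mul (e4 2) (e4 0) = e4 2)
    (h41 : mul (e4 3) (e4 0) = e4 3)
    (hz : ∀ i j : Fin 4, 1 ≤ i → 1 ≤ j → mul (e4 i) (e4 j) = 0) :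
    (∀ x y z : Fin 4 → ℂ,
      mul (mul x y) z - mul x (mul y z) = mul (mul y x) z - mul y (mul x z)) ∧
    mul (e4 0) (e4 1) - mul (e4 1) (e4 0) = e4 2 ∧
    mul (e4 0) (e4 2) - mul (e4 2) (e4 0) = e4 3 ∧
    mul (e4 0) (e4 3) - mul (e4 3) (e4 0) = 0 ∧
    (∀ i j : Fin 4, 1 ≤ i → 1 ≤ j → mul (e4 i) (e4 j) - mul (e4 j) (e4 i) = 0) := by
  have z11 := hz 1 1 (by decide) (by decide)
  have z12 := hz 1 2 (by decide) (by decide)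
  have z13 := hz 1 3 (by decide) (by decide)
  have z21 := hz 2 1 (by decide) (by decide)
  have z22 := hz 2 2 (by decide) (by decide)
  have z23 := hz 2 3 (by decide) (by decide)
  have z31 := hz 3 1 (by decide) (by decide)
  have z32 := hz 3 2 (by decide) (by decide)
  have z33 := hz 3 3 (by decide) (by decide)
  have hB : ∀ i : Fin 4, (Pi.basisFun ℂ (Fin 4)) i = e4 i := by
    intro i; ext j; simp [e4, Pi.basisFun_apply]
  refine ⟨?_, ?_, ?_, ?_, ?_⟩
  · -- left-symmetry
    set B := Pi.basisFun ℂ (Fin 4)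
    let F : (Fin 4 → ℂ) →ₗ[ℂ] (Fin 4 → ℂ) →ₗ[ℂ] (Fin 4 → ℂ) →ₗ[ℂ] (Fin 4 → ℂ) :=
      LinearMap.mk₂ ℂ (fun x y => mul (mul x y) - (mul x).comp (mul y))
        (by intro x x' y; ext z; simp [add_sub_add_comm])
        (by intro c x y; ext z; simp [smul_sub])
        (by intro x y y'; ext z; simp [add_sub_add_comm])
        (by intro c x y; ext z; simp [smul_sub])
    have key : F = F.flip := by
      refine B.ext fun i => B.ext fun j => B.ext fun k => ?_
      simp only [hB, LinearMap.flip_apply, F, LinearMap.mk₂_apply, LinearMap.sub_apply,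
        LinearMap.comp_apply]
      fin_cases i <;> fin_cases j <;> fin_cases k <;>
        simp [h11, h12, h13, h14, h21, h31, h41, z11, z12, z13, z21, z22, z23, z31, z32, z33,
          map_add, map_smul, smul_add]
    intro x y z
    have h' : F x y z = F y x z := by
      have := congrArg (fun G => G x y z) key
      simpa [LinearMap.flip_apply] using this
    simpa [F, LinearMap.mk₂_apply, sub_eq_sub_iff_add_eq_add] using h'
  · rw [h12, h21]; abel
  · rw [h13, h31]; abel
  · rw [h14, h41]; abel
  · intro i j hi hj; rw [hz i j hi hj, hz j i hj hi, sub_zero]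
end

section
/- On C^4 with basis e_1,...,e_4, the product with nonzero basis products e_1*e_1 = -(1/3)e_1 + (1/3)e_3, e_1*e_2 = e_3, e_2*e_1 = -(1/3)e_2, e_3*e_1 = -(1/3)e_3, e_4*e_1 = -(1/3)e_4 is left-symmetric, and its commutator Lie algebra satisfies [e_1,e_2] = (1/3)e_2 + e_3, [e_1,e_3] = (1/3)e_3, [e_1,e_4] = (1/3)e_4, with [e_i,e_j] = 0 for i,j ≥ 2 (the algebra g_5). -/
/-- The product on `ℂ⁴` with `e₁*e₁ = -⅓e₁ + ⅓e₃`, `e₁*e₂ = e₃`, `e₂*e₁ = -⅓e₂`,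
`e₃*e₁ = -⅓e₃`, `e₄*e₁ = -⅓e₄` (other basis products zero) is left-symmetric, with
commutator brackets `[e₁,e₂] = ⅓e₂ + e₃`, `[e₁,e₃] = ⅓e₃`, `[e₁,e₄] = ⅓e₄` and
`[eᵢ,eⱼ] = 0` for `i, j ≥ 2` (the algebra `g₅`). -/
theorem g5_lsa
    (mul : (Fin 4 → ℂ) →ₗ[ℂ] (Fin 4 → ℂ) →ₗ[ℂ] (Fin 4 → ℂ))
    (h11 : mul (e4 0) (e4 0) = (-(1 / 3) : ℂ) • e4 0 + (1 / 3 : ℂ) • e4 2)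
    (h12 : mul (e4 0) (e4 1) = e4 2)
    (h13 : mul (e4 0) (e4 2) = 0)
    (h14 : mul (e4 0) (e4 3) = 0)
    (h21 : mul (e4 1) (e4 0) = (-(1 / 3) : ℂ) • e4 1)
    (h31 : mul (e4 2) (e4 0) = (-(1 / 3) : ℂ) • e4 2)
    (h41 : mul (e4 3) (e4 0) = (-(1 / 3) : ℂ) • e4 3)
    (hz : ∀ i j : Fin 4, 1 ≤ i → 1 ≤ j → mul (e4 i) (e4 j) = 0) :
    (∀ x y z : Fin 4 → ℂ,
      mul (mul x y) z - mul x (mul y z) = mul (mul y x) z - mul y (mul x z)) ∧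
    mul (e4 0) (e4 1) - mul (e4 1) (e4 0) = (1 / 3 : ℂ) • e4 1 + e4 2 ∧
    mul (e4 0) (e4 2) - mul (e4 2) (e4 0) = (1 / 3 : ℂ) • e4 2 ∧
    mul (e4 0) (e4 3) - mul (e4 3) (e4 0) = (1 / 3 : ℂ) • e4 3 ∧
    (∀ i j : Fin 4, 1 ≤ i → 1 ≤ j → mul (e4 i) (e4 j) - mul (e4 j) (e4 i) = 0) := by
  have h22 := hz 1 1 (le_refl _) (le_refl _)
  have h23 := hz 1 2 (by decide) (by decide)
  have h24 := hz 1 3 (by decide) (by decide)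
  have h32 := hz 2 1 (by decide) (by decide)
  have h33 := hz 2 2 (by decide) (by decide)
  have h34 := hz 2 3 (by decide) (by decide)
  have h42 := hz 3 1 (by decide) (by decide)
  have h43 := hz 3 2 (by decide) (by decide)
  have h44 := hz 3 3 (by decide) (by decide)
  have key : ∀ i j k : Fin 4,
      mul (mul (e4 i) (e4 j)) (e4 k) - mul (e4 i) (mul (e4 j) (e4 k)) =
      mul (mul (e4 j) (e4 i)) (e4 k) - mul (e4 j) (mul (e4 i) (e4 k)) := by
    intro i j k
    fin_cases i <;> fin_cases j <;> fin_cases k <;>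
      simp [h11, h12, h13, h14, h21, h31, h41, h22, h23, h24, h32, h33, h34, h42, h43, h44,
        map_add, map_smul, smul_smul, smul_add]
  have expand : ∀ v : Fin 4 → ℂ, v = ∑ i, v i • e4 i := by
    intro v; ext j; simp [e4, Pi.single_apply]
  refine ⟨?_, ?_, ?_, ?_, ?_⟩
  · have key2 : ∀ (i j : Fin 4) (z : Fin 4 → ℂ),
        mul (mul (e4 i) (e4 j)) z - mul (e4 i) (mul (e4 j) z) =
        mul (mul (e4 j) (e4 i)) z - mul (e4 j) (mul (e4 i) z) := by
      intro i j z
      rw [expand z]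
      simp only [map_sum, map_smul, ← Finset.sum_sub_distrib, ← smul_sub]
      exact Finset.sum_congr rfl fun k _ => by rw [key i j k]
    have key3 : ∀ (i : Fin 4) (y z : Fin 4 → ℂ),
        mul (mul (e4 i) y) z - mul (e4 i) (mul y z) =
        mul (mul y (e4 i)) z - mul y (mul (e4 i) z) := by
      intro i y z
      rw [expand y]
      simp only [map_sum, map_smul, LinearMap.sum_apply, LinearMap.smul_apply,
        ← Finset.sum_sub_distrib, ← smul_sub]
      exact Finset.sum_congr rfl fun j _ => by rw [key2 i j z]
    intro x y z
    rw [expand x]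
    simp only [map_sum, map_smul, LinearMap.sum_apply, LinearMap.smul_apply,
      ← Finset.sum_sub_distrib, ← smul_sub]
    exact Finset.sum_congr rfl fun i _ => by rw [key3 i y z]
  · rw [h12, h21]; module
  · rw [h13, h31]; module
  · rw [h14, h41]; module
  · intro i j hi hj; rw [hz i j hi hj, hz j i hj hi, sub_zero]
end
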